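/- Theorem 1 (Curious Explorer is provable, deterministic form): with the Curious Explorer iterates, poorly visited sets K_n, and intrinsic rewards r_n, fix N ≥ 0 and nonnegative reals ε₀, …, ε_N, and assume for every 0 ≤ n ≤ N the ε_n-optimality condition sup_{π∈Π} V_{π,r_n}(μ_n) ≤ V_{π_{n+1},r_n}(μ_n) + ε_n. For s ∈ S set β̃(s) = β_{ñ(s)} with ñ(s) = max{ n ≤ N : s ∈ K_n } if s lies in some K_n with n ≤ N, and β̃(s) = 0 otherwise. Then Σ_{n=0}^N sup_{π∈Π} Σ_{s∈K_n} d_{δ_{s₀}}^π(s) ≤ 2 Σ_{n=0}^N ε_n + 2 Σ_{s∈S} β̃(s) + 2 Σ_{s∈S} sup_{π∈Π} d_{δ_{s₀}}^π(s). -/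

import Mathlib

open Finset

variable {S A : Type*} [Fintype S] [Fintype A] [Nonempty S] [Nonempty A] [DecidableEq S]

/-- `ρ` is a probability distribution on the finite type `S`. -/
def IsDist {S : Type*} [Fintype S] (ρ : S → ℝ) : Prop :=
  (∀ s, 0 ≤ ρ s) ∧ ∑ s, ρ s = 1

/-- `π` is a stationary policy: a probability distribution over actions at each state. -/
def IsPolicy (π : S → A → ℝ) : Prop := ∀ s, IsDist (π s)

/-- `P` is a transition kernel: `P s a` is a distribution on next states. -/
def IsKernel (P : S → A → S → ℝ) : Prop := ∀ s a, IsDist (P s a)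

/-- The induced state-transition kernel `K_π(s'|s) = Σ_a π(a|s) P(s'|s,a)`. -/
def kpol (P : S → A → S → ℝ) (π : S → A → ℝ) (s s' : S) : ℝ :=
  ∑ a, π s a * P s a s'

/-- One step of the Markov chain with kernel `K_π`: `ρ ↦ ρ K_π`. -/
def step (P : S → A → S → ℝ) (π : S → A → ℝ) (ρ : S → ℝ) : S → ℝ :=
  fun s' => ∑ s, ρ s * kpol P π s s'

/-- `ρ K_π^t`: the state distribution after `t` steps started from `ρ`. -/
def iterDist (P : S → A → S → ℝ) (π : S → A → ℝ) (ρ : S → ℝ) (t : ℕ) : S → ℝ :=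
  (step P π)^[t] ρ

/-- The discounted state visitation distribution
`d_ρ^π(s) = (1-γ) Σ_t γ^t (ρ K_π^t)(s)`. -/
noncomputable def dvisit (P : S → A → S → ℝ) (γ : ℝ) (π : S → A → ℝ)
    (ρ : S → ℝ) (s : S) : ℝ :=
  (1 - γ) * ∑' t : ℕ, γ ^ t * iterDist P π ρ t s

/-- The normalized value function
`V_{π,r}(ρ) = (1-γ) Σ_t γ^t Σ_{s,a} (ρ K_π^t)(s) π(a|s) r(s,a)`. -/
noncomputable def value (P : S → A → S → ℝ) (γ : ℝ) (π : S → A → ℝ)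
    (r : S → A → ℝ) (ρ : S → ℝ) : ℝ :=
  (1 - γ) * ∑' t : ℕ, γ ^ t * ∑ s, ∑ a, iterDist P π ρ t s * π s a * r s a

/-- The Dirac distribution at `s₀`. -/
def dirac (s₀ : S) : S → ℝ := fun s => if s = s₀ then 1 else 0

/-- Curious Explorer reset models: `ceMu P γ πseq s₀ 0 = μ₋₁ = δ_{s₀}` and,
for `n ≥ 0`, `ceMu P γ πseq s₀ (n+1) = μ_n = ½ D_n + ½ δ_{s₀}` where
`D_n = d_{μ_{n-1}}^{π_n}`. -/
noncomputable def ceMu (P : S → A → S → ℝ) (γ : ℝ) (πseq : ℕ → S → A → ℝ)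
    (s₀ : S) : ℕ → S → ℝ
  | 0 => dirac s₀
  | n + 1 => fun s =>
      (1 / 2) * dvisit P γ (πseq n) (ceMu P γ πseq s₀ n) s + (1 / 2) * dirac s₀ s

/-- `D_n = d_{μ_{n-1}}^{π_n}`. -/
noncomputable def ceD (P : S → A → S → ℝ) (γ : ℝ) (πseq : ℕ → S → A → ℝ)
    (s₀ : S) (n : ℕ) : S → ℝ :=
  dvisit P γ (πseq n) (ceMu P γ πseq s₀ n)

open scoped Classical in
/-- The set of poorly visited states `K_n = { s : Σ_{i=0}^n D_i(s) ≤ β_n }`. -/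
noncomputable def ceK (P : S → A → S → ℝ) (γ : ℝ) (πseq : ℕ → S → A → ℝ)
    (s₀ : S) (β : ℕ → ℝ) (n : ℕ) : Finset S :=
  Finset.univ.filter fun s => ∑ i ∈ Finset.range (n + 1), ceD P γ πseq s₀ i s ≤ β n

/-- The intrinsic reward `r_n(s,a) = 1_{s ∈ K_n}`. -/
noncomputable def ceR (P : S → A → S → ℝ) (γ : ℝ) (πseq : ℕ → S → A → ℝ)
    (s₀ : S) (β : ℕ → ℝ) (n : ℕ) (s : S) (_a : A) : ℝ :=
  if s ∈ ceK P γ πseq s₀ β n then 1 else 0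

open scoped Classical in
/-- `β̃(s) = β_{ñ(s)}` where `ñ(s) = max { n ≤ N : s ∈ K_n }` if `s` lies in some
`K_n` with `n ≤ N`, and `β̃(s) = 0` otherwise. -/
noncomputable def ceBetaTilde (P : S → A → S → ℝ) (γ : ℝ) (πseq : ℕ → S → A → ℝ)
    (s₀ : S) (β : ℕ → ℝ) (N : ℕ) (s : S) : ℝ :=
  if ∃ n ≤ N, s ∈ ceK P γ πseq s₀ β n then
    β (Nat.findGreatest (fun n => s ∈ ceK P γ πseq s₀ β n) N)
  else 0

/-!
For each round `n`, compare the best coverage of `K_n` from `s₀` with that of `π_{n+1}`. A policy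
`π` doing better from `s₀` can be combined with `π_{n+1}` into the strategy "follow `π` if the
start is `s₀`, and `π_{n+1}` otherwise"; its visitation distribution is realized by a stationary
policy (state-action occupancy divided by state visitation). Since `μ_n(s₀) ≥ 1/2`, the
`ε_n`-optimality of `π_{n+1}` from `μ_n` then gives
`sup_π Σ_{s ∈ K_n} d^π(s) ≤ Σ_{s ∈ K_n} d^{π_{n+1}}(s) + 2 ε_n` (visitation from `δ_{s₀}`).

Summing over `n` and exchanging the sums, fix a state `s` and let `ñ = ñ(s)`. For the rounds
`n < ñ` with `s ∈ K_n`, again by `μ_{n+1}(s₀) ≥ 1/2`, `d^{π_{n+1}}(s) ≤ 2 D_{n+1}(s)`, and these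
add up to at most `2 β_ñ` because `s ∈ K_ñ`; round `ñ` contributes at most `sup_π d^π(s)`.
-/

open Matrix

section RowStochastic

variable {S : Type*} [Fintype S] {ρ : S → ℝ}

lemma IsDist.sum_le_one (hρ : IsDist ρ) (K : Finset S) : ∑ s ∈ K, ρ s ≤ 1 :=
  hρ.2 ▸ sum_le_sum_of_subset_of_nonneg K.subset_univ fun s _ _ => hρ.1 s

lemma IsDist.le_one (hρ : IsDist ρ) (s : S) : ρ s ≤ 1 := by
  simpa using hρ.sum_le_one {s}

lemma dirac_eq_single {S : Type*} [DecidableEq S] (x : S) : dirac x = Pi.single x 1 := by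
  ext s
  simp [dirac, Pi.single_apply]

variable [DecidableEq S]

lemma isDist_dirac (x : S) : IsDist (dirac x) := by
  refine ⟨fun s => ?_, by simp [dirac]⟩
  unfold dirac
  split_ifs <;> norm_num

lemma IsDist.vecMul {M : Matrix S S ℝ} (hρ : IsDist ρ) (hM : M ∈ rowStochastic ℝ S) :
    IsDist (ρ ᵥ* M) := by
  refine ⟨nonneg_vecMul_of_mem_rowStochastic hM hρ.1, ?_⟩
  have hsum := hρ.2
  rw [← dotProduct_one] at hsum ⊢
  exact vecMul_dotProduct_one_eq_one_rowStochastic hM hsum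

lemma sum_abs_vecMul_le {M : Matrix S S ℝ} (hM : M ∈ rowStochastic ℝ S) (v : S → ℝ) :
    ∑ s, |(v ᵥ* M) s| ≤ ∑ s, |v s| :=
  calc ∑ s, |(v ᵥ* M) s| ≤ ∑ s, ∑ s', |v s'| * M s' s := by
        refine sum_le_sum fun s _ => (abs_sum_le_sum_abs _ _).trans_eq ?_
        simp only [abs_mul, abs_of_nonneg (nonneg_of_mem_rowStochastic hM)]
    _ = ∑ s', |v s'| := by
        rw [sum_comm]
        simp only [← mul_sum, sum_row_of_mem_rowStochastic hM, mul_one]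

lemma eq_zero_of_eq_smul_vecMul {M : Matrix S S ℝ} (hM : M ∈ rowStochastic ℝ S)
    {γ : ℝ} (hγ : |γ| < 1) {v : S → ℝ} (hv : v = γ • (v ᵥ* M)) : v = 0 := by
  have hle : ∑ s, |v s| ≤ |γ| * ∑ s, |v s| :=
    calc ∑ s, |v s| = |γ| * ∑ s, |(v ᵥ* M) s| := by
          conv_lhs => rw [hv]
          simp [abs_mul, mul_sum]
      _ ≤ |γ| * ∑ s, |v s| := mul_le_mul_of_nonneg_left (sum_abs_vecMul_le hM v) (abs_nonneg γ)
  have hzero : ∑ s, |v s| = 0 :=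
    le_antisymm (by nlinarith [abs_nonneg γ]) (sum_nonneg fun s _ => abs_nonneg _)
  ext s
  simpa using (sum_eq_zero_iff_of_nonneg fun s _ => abs_nonneg (v s)).1 hzero s

end RowStochastic

def transitionMatrix {S A : Type*} [Fintype A] (P : S → A → S → ℝ) (π : S → A → ℝ) :
    Matrix S S ℝ :=
  Matrix.of (kpol P π)

@[simp]
lemma transitionMatrix_apply {S A : Type*} [Fintype A] (P : S → A → S → ℝ) (π : S → A → ℝ)
    (s s' : S) : transitionMatrix P π s s' = kpol P π s s' := rfl

section MarkovChain

variable {S A : Type*} [Fintype S] [Fintype A] [DecidableEq S]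
  {P : S → A → S → ℝ} {π : S → A → ℝ} {ρ : S → ℝ}

lemma iterDist_eq_vecMul_pow (t : ℕ) :
    iterDist P π ρ t = ρ ᵥ* transitionMatrix P π ^ t := by
  induction t with
  | zero => simp [iterDist]
  | succ t ih =>
    rw [iterDist, Function.iterate_succ_apply', ← iterDist, ih, pow_succ,
      ← vecMul_vecMul]
    rfl

lemma transitionMatrix_mem_rowStochastic (hP : IsKernel P) (hπ : IsPolicy π) :
    transitionMatrix P π ∈ rowStochastic ℝ S := by
  refine mem_rowStochastic_iff_sum.2 ⟨fun s s' => ?_, fun s => ?_⟩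
  · exact sum_nonneg fun a _ => mul_nonneg ((hπ s).1 a) ((hP s a).1 s')
  · simp only [transitionMatrix, Matrix.of_apply, kpol]
    rw [sum_comm]
    simp only [← mul_sum, (hP s _).2, mul_one, (hπ s).2]

lemma isDist_iterDist (hP : IsKernel P) (hπ : IsPolicy π) (hρ : IsDist ρ) (t : ℕ) :
    IsDist (iterDist P π ρ t) := by
  rw [iterDist_eq_vecMul_pow]
  exact hρ.vecMul (pow_mem (transitionMatrix_mem_rowStochastic hP hπ) t)

lemma iterDist_succ (t : ℕ) :
    iterDist P π ρ (t + 1) = iterDist P π ρ t ᵥ* transitionMatrix P π := by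
  rw [iterDist_eq_vecMul_pow, iterDist_eq_vecMul_pow, pow_succ, vecMul_vecMul]

lemma iterDist_apply_eq_sum_dirac (t : ℕ) (s : S) :
    iterDist P π ρ t s = ∑ x, ρ x * iterDist P π (dirac x) t s := by
  simp only [iterDist_eq_vecMul_pow, dirac_eq_single, single_one_vecMul]
  rfl

end MarkovChain

section Visitation

variable {S A : Type*} [Fintype S] [Fintype A] [DecidableEq S]
  {P : S → A → S → ℝ} {γ : ℝ} {π : S → A → ℝ} {ρ : S → ℝ}

lemma summable_iterDist (hP : IsKernel P) (hπ : IsPolicy π) (hρ : IsDist ρ)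
    (hγ0 : 0 ≤ γ) (hγ1 : γ < 1) (s : S) :
    Summable fun t => γ ^ t * iterDist P π ρ t s :=
  (summable_geometric_of_lt_one hγ0 hγ1).of_nonneg_of_le
    (fun t => mul_nonneg (pow_nonneg hγ0 t) ((isDist_iterDist hP hπ hρ t).1 s))
    (fun t => mul_le_of_le_one_right (pow_nonneg hγ0 t) ((isDist_iterDist hP hπ hρ t).le_one s))

lemma isDist_dvisit (hP : IsKernel P) (hπ : IsPolicy π) (hρ : IsDist ρ)
    (hγ0 : 0 ≤ γ) (hγ1 : γ < 1) : IsDist (dvisit P γ π ρ) := by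
  refine ⟨fun s => mul_nonneg (sub_nonneg.2 hγ1.le) (tsum_nonneg fun t =>
    mul_nonneg (pow_nonneg hγ0 t) ((isDist_iterDist hP hπ hρ t).1 s)), ?_⟩
  have hmass (t : ℕ) : ∑ s, γ ^ t * iterDist P π ρ t s = γ ^ t := by
    rw [← mul_sum, (isDist_iterDist hP hπ hρ t).2, mul_one]
  simp only [dvisit, ← mul_sum]
  rw [← Summable.tsum_finsetSum fun s _ => summable_iterDist hP hπ hρ hγ0 hγ1 s,
    tsum_congr hmass, tsum_geometric_of_lt_one hγ0 hγ1, mul_inv_cancel₀ (sub_ne_zero.2 hγ1.ne')]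

lemma dvisit_apply_eq_sum_dirac (hP : IsKernel P) (hπ : IsPolicy π)
    (hγ0 : 0 ≤ γ) (hγ1 : γ < 1) (s : S) :
    dvisit P γ π ρ s = ∑ x, ρ x * dvisit P γ π (dirac x) s := by
  have hterm (t : ℕ) : γ ^ t * iterDist P π ρ t s =
      ∑ x, ρ x * (γ ^ t * iterDist P π (dirac x) t s) := by
    rw [iterDist_apply_eq_sum_dirac, mul_sum]
    exact sum_congr rfl fun x _ => by ring
  rw [dvisit, tsum_congr hterm, Summable.tsum_finsetSum fun x _ =>
    (summable_iterDist hP hπ (isDist_dirac x) hγ0 hγ1 s).mul_left (ρ x), mul_sum]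
  refine sum_congr rfl fun x _ => ?_
  rw [tsum_mul_left, dvisit]
  ring

lemma dvisit_le_iSup (hP : IsKernel P) (hπ : IsPolicy π) (hρ : IsDist ρ)
    (hγ0 : 0 ≤ γ) (hγ1 : γ < 1) (s : S) :
    dvisit P γ π ρ s ≤ ⨆ π' : {π' : S → A → ℝ // IsPolicy π'}, dvisit P γ π'.1 ρ s := by
  refine le_ciSup (f := fun π' : {π' : S → A → ℝ // IsPolicy π'} => dvisit P γ π'.1 ρ s)
    ⟨1, ?_⟩ ⟨π, hπ⟩
  rintro _ ⟨π', rfl⟩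
  exact (isDist_dvisit hP π'.2 hρ hγ0 hγ1).le_one s

lemma dvisit_eq_flow (hP : IsKernel P) (hπ : IsPolicy π) (hρ : IsDist ρ)
    (hγ0 : 0 ≤ γ) (hγ1 : γ < 1) :
    dvisit P γ π ρ = (1 - γ) • ρ + γ • (dvisit P γ π ρ ᵥ* transitionMatrix P π) := by
  ext s
  have hterm (t : ℕ) : γ ^ (t + 1) * iterDist P π ρ (t + 1) s =
      ∑ s', γ * ((γ ^ t * iterDist P π ρ t s') * kpol P π s' s) := by
    simp only [iterDist_succ, vecMul, dotProduct, transitionMatrix_apply, mul_sum]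
    exact sum_congr rfl fun s' _ => by ring
  have hshift : ∑' t, γ ^ t * iterDist P π ρ t s =
      ρ s + ∑ s', γ * ((∑' t, γ ^ t * iterDist P π ρ t s') * kpol P π s' s) := by
    rw [(summable_iterDist hP hπ hρ hγ0 hγ1 s).tsum_eq_zero_add, tsum_congr hterm,
      Summable.tsum_finsetSum fun s' _ =>
        ((summable_iterDist hP hπ hρ hγ0 hγ1 s').mul_right _).mul_left γ]
    simp only [pow_zero, one_mul, tsum_mul_left, tsum_mul_right]
    rfl
  simp only [Pi.add_apply, Pi.smul_apply, smul_eq_mul, vecMul, dotProduct, transitionMatrix_apply]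
  rw [dvisit, hshift, mul_add, mul_sum, mul_sum]
  congr 1
  exact sum_congr rfl fun s' _ => by simp only [dvisit]; ring

lemma dvisit_eq_of_flow (hP : IsKernel P) (hπ : IsPolicy π) (hρ : IsDist ρ)
    (hγ0 : 0 ≤ γ) (hγ1 : γ < 1) {v : S → ℝ}
    (hv : v = (1 - γ) • ρ + γ • (v ᵥ* transitionMatrix P π)) :
    dvisit P γ π ρ = v := by
  refine sub_eq_zero.1 (eq_zero_of_eq_smul_vecMul (transitionMatrix_mem_rowStochastic hP hπ)
    (abs_lt.2 ⟨by linarith, hγ1⟩) ?_)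
  rw [sub_vecMul, smul_sub]
  nth_rewrite 1 [dvisit_eq_flow hP hπ hρ hγ0 hγ1, hv]
  abel

end Visitation

section MixturePolicy

variable {S A : Type*} [Fintype S] [Fintype A] [DecidableEq S]
  {P : S → A → S → ℝ} {γ : ℝ} {μ : S → ℝ} {σ : S → S → A → ℝ}

/-- Visitation of the non-stationary strategy that draws `x ∼ μ` and then follows `σ x`. -/
noncomputable def mixtureVisit (P : S → A → S → ℝ) (γ : ℝ) (μ : S → ℝ)
    (σ : S → S → A → ℝ) (s : S) : ℝ :=
  ∑ x, μ x * dvisit P γ (σ x) (dirac x) s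

noncomputable def mixtureOccupancy (P : S → A → S → ℝ) (γ : ℝ) (μ : S → ℝ)
    (σ : S → S → A → ℝ) (s : S) (a : A) : ℝ :=
  ∑ x, μ x * dvisit P γ (σ x) (dirac x) s * σ x s a

/-- On states the mixture never visits, any action distribution would do; `σ s s` is used. -/
noncomputable def mixturePolicy (P : S → A → S → ℝ) (γ : ℝ) (μ : S → ℝ)
    (σ : S → S → A → ℝ) (s : S) (a : A) : ℝ :=
  if mixtureVisit P γ μ σ s = 0 then σ s s a
  else mixtureOccupancy P γ μ σ s a / mixtureVisit P γ μ σ s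

lemma sum_mixtureOccupancy (hσ : ∀ x, IsPolicy (σ x)) (s : S) :
    ∑ a, mixtureOccupancy P γ μ σ s a = mixtureVisit P γ μ σ s := by
  simp only [mixtureOccupancy, mixtureVisit]
  rw [sum_comm]
  simp only [← mul_sum, (hσ _ s).2, mul_one]

lemma mixtureOccupancy_nonneg (hP : IsKernel P) (hμ : IsDist μ) (hσ : ∀ x, IsPolicy (σ x))
    (hγ0 : 0 ≤ γ) (hγ1 : γ < 1) (s : S) (a : A) : 0 ≤ mixtureOccupancy P γ μ σ s a :=
  sum_nonneg fun x _ => mul_nonneg (mul_nonneg (hμ.1 x)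
    ((isDist_dvisit hP (hσ x) (isDist_dirac x) hγ0 hγ1).1 s)) ((hσ x s).1 a)

lemma mixtureVisit_mul_mixturePolicy (hP : IsKernel P) (hμ : IsDist μ)
    (hσ : ∀ x, IsPolicy (σ x)) (hγ0 : 0 ≤ γ) (hγ1 : γ < 1) (s : S) (a : A) :
    mixtureVisit P γ μ σ s * mixturePolicy P γ μ σ s a = mixtureOccupancy P γ μ σ s a := by
  have hocc := mixtureOccupancy_nonneg hP hμ hσ hγ0 hγ1 s
  rw [mixturePolicy]
  split_ifs with h
  · rw [h, zero_mul]
    refine le_antisymm (hocc a) ?_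
    rw [← h, ← sum_mixtureOccupancy hσ]
    exact single_le_sum (fun a _ => hocc a) (mem_univ a)
  · field_simp

lemma isPolicy_mixturePolicy (hP : IsKernel P) (hμ : IsDist μ) (hσ : ∀ x, IsPolicy (σ x))
    (hγ0 : 0 ≤ γ) (hγ1 : γ < 1) : IsPolicy (mixturePolicy P γ μ σ) := by
  intro s
  by_cases h : mixtureVisit P γ μ σ s = 0
  · have hw : mixturePolicy P γ μ σ s = σ s s := by ext a; simp [mixturePolicy, h]
    exact hw ▸ hσ s s
  · have hw : mixturePolicy P γ μ σ s = fun a => mixtureOccupancy P γ μ σ s a /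
        mixtureVisit P γ μ σ s := by ext a; simp [mixturePolicy, h]
    rw [hw]
    refine ⟨fun a => div_nonneg (mixtureOccupancy_nonneg hP hμ hσ hγ0 hγ1 s a) ?_, ?_⟩
    · rw [← sum_mixtureOccupancy hσ]
      exact sum_nonneg fun a _ => mixtureOccupancy_nonneg hP hμ hσ hγ0 hγ1 s a
    · rw [← sum_div, sum_mixtureOccupancy hσ, div_self h]

lemma mixtureVisit_vecMul_transitionMatrix (hP : IsKernel P) (hμ : IsDist μ)
    (hσ : ∀ x, IsPolicy (σ x)) (hγ0 : 0 ≤ γ) (hγ1 : γ < 1) :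
    mixtureVisit P γ μ σ ᵥ* transitionMatrix P (mixturePolicy P γ μ σ) =
      ∑ x, μ x • (dvisit P γ (σ x) (dirac x) ᵥ* transitionMatrix P (σ x) : S → ℝ) := by
  ext s
  simp only [vecMul, dotProduct, transitionMatrix_apply, kpol, Finset.sum_apply,
    Pi.smul_apply, smul_eq_mul, mul_sum, ← mul_assoc,
    mixtureVisit_mul_mixturePolicy hP hμ hσ hγ0 hγ1, mixtureOccupancy, sum_mul]
  exact (sum_congr rfl fun s' _ => sum_comm).trans sum_comm

lemma dvisit_mixturePolicy (hP : IsKernel P) (hμ : IsDist μ) (hσ : ∀ x, IsPolicy (σ x))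
    (hγ0 : 0 ≤ γ) (hγ1 : γ < 1) :
    dvisit P γ (mixturePolicy P γ μ σ) μ = mixtureVisit P γ μ σ := by
  refine dvisit_eq_of_flow hP (isPolicy_mixturePolicy hP hμ hσ hγ0 hγ1) hμ hγ0 hγ1 ?_
  rw [mixtureVisit_vecMul_transitionMatrix hP hμ hσ hγ0 hγ1]
  ext s
  have hflow (x : S) := congrFun (dvisit_eq_flow hP (hσ x) (isDist_dirac x) hγ0 hγ1) s
  simp only [mixtureVisit, hflow, Pi.add_apply, Pi.smul_apply, smul_eq_mul, Finset.sum_apply,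
    mul_add, sum_add_distrib, mul_sum]
  congr 1
  · simp [dirac, mul_comm]
  · exact sum_congr rfl fun x _ => by ring

end MixturePolicy

section Value

variable {S A : Type*} [Fintype S] [Fintype A] [DecidableEq S]
  {P : S → A → S → ℝ} {γ : ℝ} {π : S → A → ℝ} {ρ : S → ℝ}

lemma value_eq_sum_dvisit (hP : IsKernel P) (hπ : IsPolicy π) (hρ : IsDist ρ)
    (hγ0 : 0 ≤ γ) (hγ1 : γ < 1) (r : S → A → ℝ) :
    value P γ π r ρ = ∑ s, dvisit P γ π ρ s * ∑ a, π s a * r s a := by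
  have hterm (t : ℕ) : γ ^ t * ∑ s, ∑ a, iterDist P π ρ t s * π s a * r s a =
      ∑ s, γ ^ t * iterDist P π ρ t s * ∑ a, π s a * r s a := by
    simp only [mul_sum]
    exact sum_congr rfl fun s _ => sum_congr rfl fun a _ => by ring
  rw [value, tsum_congr hterm, Summable.tsum_finsetSum fun s _ =>
    (summable_iterDist hP hπ hρ hγ0 hγ1 s).mul_right _, mul_sum]
  exact sum_congr rfl fun s _ => by rw [tsum_mul_right, dvisit]; ring

lemma value_indicator (hP : IsKernel P) (hπ : IsPolicy π) (hρ : IsDist ρ)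
    (hγ0 : 0 ≤ γ) (hγ1 : γ < 1) (K : Finset S) :
    value P γ π (fun s _ => if s ∈ K then 1 else 0) ρ = ∑ s ∈ K, dvisit P γ π ρ s := by
  rw [value_eq_sum_dvisit hP hπ hρ hγ0 hγ1]
  simp [(hπ _).2, sum_ite_mem]

end Value

section NearOptimality

variable {S A : Type*} [Fintype S] [Fintype A] [DecidableEq S]
  {P : S → A → S → ℝ} {γ : ℝ} {μ : S → ℝ} {π p : S → A → ℝ}

lemma mul_sub_le_of_near_optimal (hP : IsKernel P) (hγ0 : 0 ≤ γ) (hγ1 : γ < 1)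
    (hμ : IsDist μ) (hπ : IsPolicy π) (hp : IsPolicy p) (K : Finset S) (x₀ : S) {ε : ℝ}
    (hopt : ∀ w, IsPolicy w →
      ∑ s ∈ K, dvisit P γ w μ s ≤ ∑ s ∈ K, dvisit P γ p μ s + ε) :
    μ x₀ * (∑ s ∈ K, dvisit P γ π (dirac x₀) s - ∑ s ∈ K, dvisit P γ p (dirac x₀) s) ≤ ε := by
  set σ : S → S → A → ℝ := Function.update (fun _ => p) x₀ π
  have hσ (x : S) : IsPolicy (σ x) := by
    rcases eq_or_ne x x₀ with rfl | hx
    · simpa [σ] using hπ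
    · simpa [σ, hx] using hp
  have hmix := hopt _ (isPolicy_mixturePolicy hP hμ hσ hγ0 hγ1)
  rw [dvisit_mixturePolicy hP hμ hσ hγ0 hγ1] at hmix
  have hgap : ∑ s ∈ K, mixtureVisit P γ μ σ s - ∑ s ∈ K, dvisit P γ p μ s =
      ∑ x, μ x * (∑ s ∈ K, dvisit P γ (σ x) (dirac x) s - ∑ s ∈ K, dvisit P γ p (dirac x) s) := by
    simp only [mixtureVisit, dvisit_apply_eq_sum_dirac (ρ := μ) hP hp hγ0 hγ1, mul_sub,
      mul_sum, sum_sub_distrib]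
    rw [sum_comm, sum_comm (s := K) (t := Finset.univ)
      (f := fun s x => μ x * dvisit P γ p (dirac x) s)]
  have hsingle := sum_eq_single (s := Finset.univ) (f := fun x => μ x *
      (∑ s ∈ K, dvisit P γ (σ x) (dirac x) s - ∑ s ∈ K, dvisit P γ p (dirac x) s)) x₀
    (fun x _ hx => by simp [σ, hx]) (by simp)
  simp only [σ, Function.update_self] at hsingle hgap
  linarith

end NearOptimality

lemma sum_filter_le_of_findGreatest {p : ℕ → Prop} [DecidablePred p] {a D β : ℕ → ℝ} {c : ℝ}
    {N : ℕ} (hD : ∀ i, 0 ≤ D i) (haD : ∀ n, a n ≤ 2 * D (n + 1)) (hac : ∀ n, a n ≤ c)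
    (hβ : ∀ n, p n → ∑ i ∈ range (n + 1), D i ≤ β n) (hN : ∃ n ≤ N, p n) :
    ∑ n ∈ (range (N + 1)).filter p, a n ≤ 2 * β (Nat.findGreatest p N) + c := by
  obtain ⟨n₀, hn₀N, hn₀⟩ := hN
  set m := Nat.findGreatest p N
  have hm : p m := Nat.findGreatest_spec hn₀N hn₀
  have hmN : m ≤ N := Nat.findGreatest_le N
  have hfilter : (range (N + 1)).filter p = insert m ((range m).filter p) := by
    ext n
    simp only [mem_filter, mem_range, mem_insert]
    constructor
    · rintro ⟨hn, hpn⟩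
      rcases (Nat.le_findGreatest (P := p) (Nat.lt_succ_iff.1 hn) hpn).eq_or_lt with h | h
      exacts [Or.inl h, Or.inr ⟨h, hpn⟩]
    · rintro (rfl | ⟨hn, hpn⟩)
      exacts [⟨by omega, hm⟩, ⟨by omega, hpn⟩]
  have hbefore : ∑ n ∈ (range m).filter p, a n ≤ 2 * β m :=
    calc ∑ n ∈ (range m).filter p, a n ≤ ∑ n ∈ range m, 2 * D (n + 1) := by
          rw [sum_filter]
          refine sum_le_sum fun n _ => ?_
          split_ifs
          exacts [haD n, mul_nonneg zero_le_two (hD _)]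
      _ ≤ 2 * ∑ i ∈ range (m + 1), D i := by
          rw [← mul_sum, sum_range_succ' D m]
          linarith [hD 0]
      _ ≤ 2 * β m := by linarith [hβ m hm]
  rw [hfilter, sum_insert (by simp)]
  linarith [hac m]

section CuriousExplorer

variable {S A : Type*} [Fintype S] [Fintype A] [DecidableEq S]
  {P : S → A → S → ℝ} {γ : ℝ} {πseq : ℕ → S → A → ℝ} {s₀ : S} {β : ℕ → ℝ}

lemma isDist_ceMu (hP : IsKernel P) (hπseq : ∀ k, IsPolicy (πseq k))
    (hγ0 : 0 ≤ γ) (hγ1 : γ < 1) (n : ℕ) : IsDist (ceMu P γ πseq s₀ n) := by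
  induction n with
  | zero => exact isDist_dirac s₀
  | succ n ih =>
    have hD := isDist_dvisit hP (hπseq n) ih hγ0 hγ1
    refine ⟨fun s => ?_, ?_⟩
    · exact add_nonneg (mul_nonneg (by norm_num) (hD.1 s))
        (mul_nonneg (by norm_num) ((isDist_dirac s₀).1 s))
    · simp only [ceMu]
      rw [sum_add_distrib, ← mul_sum, ← mul_sum, hD.2, (isDist_dirac s₀).2]
      norm_num

lemma one_half_le_ceMu_succ_self (hP : IsKernel P) (hπseq : ∀ k, IsPolicy (πseq k))
    (hγ0 : 0 ≤ γ) (hγ1 : γ < 1) (n : ℕ) : 1 / 2 ≤ ceMu P γ πseq s₀ (n + 1) s₀ := by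
  have hD := (isDist_dvisit hP (hπseq n) (isDist_ceMu (s₀ := s₀) hP hπseq hγ0 hγ1 n)
    hγ0 hγ1).1 s₀
  simp only [ceMu, dirac, if_true]
  linarith

lemma dvisit_le_two_mul_ceD (hP : IsKernel P) (hπseq : ∀ k, IsPolicy (πseq k))
    (hγ0 : 0 ≤ γ) (hγ1 : γ < 1) (n : ℕ) (s : S) :
    dvisit P γ (πseq (n + 1)) (dirac s₀) s ≤ 2 * ceD P γ πseq s₀ (n + 1) s := by
  have hμ := isDist_ceMu (s₀ := s₀) hP hπseq hγ0 hγ1 (n + 1)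
  have hd (x : S) := (isDist_dvisit hP (hπseq (n + 1)) (isDist_dirac x) hγ0 hγ1).1 s
  have hstart : ceMu P γ πseq s₀ (n + 1) s₀ * dvisit P γ (πseq (n + 1)) (dirac s₀) s ≤
      ceD P γ πseq s₀ (n + 1) s := by
    rw [ceD, dvisit_apply_eq_sum_dirac (ρ := ceMu P γ πseq s₀ (n + 1)) hP (hπseq (n + 1)) hγ0 hγ1]
    exact single_le_sum (fun x _ => mul_nonneg (hμ.1 x) (hd x)) (mem_univ s₀)
  nlinarith [one_half_le_ceMu_succ_self (s₀ := s₀) hP hπseq hγ0 hγ1 n, hd s₀]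

lemma value_ceR (hP : IsKernel P) (hγ0 : 0 ≤ γ) (hγ1 : γ < 1) {π : S → A → ℝ}
    (hπ : IsPolicy π) {ρ : S → ℝ} (hρ : IsDist ρ) (n : ℕ) :
    value P γ π (ceR P γ πseq s₀ β n) ρ = ∑ s ∈ ceK P γ πseq s₀ β n, dvisit P γ π ρ s :=
  value_indicator hP hπ hρ hγ0 hγ1 _

lemma sum_ceK_dvisit_le (hP : IsKernel P) (hγ0 : 0 ≤ γ) (hγ1 : γ < 1)
    (hπseq : ∀ k, IsPolicy (πseq k)) {n : ℕ} {ε : ℝ}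
    (hopt : (⨆ π : {π' : S → A → ℝ // IsPolicy π'},
        value P γ π.1 (ceR P γ πseq s₀ β n) (ceMu P γ πseq s₀ (n + 1))) ≤
      value P γ (πseq (n + 1)) (ceR P γ πseq s₀ β n) (ceMu P γ πseq s₀ (n + 1)) + ε)
    {π : S → A → ℝ} (hπ : IsPolicy π) :
    ∑ s ∈ ceK P γ πseq s₀ β n, dvisit P γ π (dirac s₀) s ≤
      ∑ s ∈ ceK P γ πseq s₀ β n, dvisit P γ (πseq (n + 1)) (dirac s₀) s + 2 * ε := by
  have hμ := isDist_ceMu (s₀ := s₀) hP hπseq hγ0 hγ1 (n + 1)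
  have hbdd : BddAbove (Set.range fun w : {w : S → A → ℝ // IsPolicy w} =>
      value P γ w.1 (ceR P γ πseq s₀ β n) (ceMu P γ πseq s₀ (n + 1))) := by
    refine ⟨1, ?_⟩
    rintro _ ⟨w, rfl⟩
    dsimp only
    rw [value_ceR hP hγ0 hγ1 w.2 hμ]
    exact (isDist_dvisit hP w.2 hμ hγ0 hγ1).sum_le_one _
  have hnear (w : S → A → ℝ) (hw : IsPolicy w) :
      ∑ s ∈ ceK P γ πseq s₀ β n, dvisit P γ w (ceMu P γ πseq s₀ (n + 1)) s ≤
        ∑ s ∈ ceK P γ πseq s₀ β n, dvisit P γ (πseq (n + 1)) (ceMu P γ πseq s₀ (n + 1)) s +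
          ε := by
    simpa only [value_ceR hP hγ0 hγ1 hw hμ, value_ceR hP hγ0 hγ1 (hπseq (n + 1)) hμ] using
      (le_ciSup hbdd ⟨w, hw⟩).trans hopt
  have hε : 0 ≤ ε := by simpa using hnear _ (hπseq (n + 1))
  have hgap := mul_sub_le_of_near_optimal hP hγ0 hγ1 hμ hπ (hπseq (n + 1)) _ s₀ hnear
  nlinarith [one_half_le_ceMu_succ_self (s₀ := s₀) hP hπseq hγ0 hγ1 n]

lemma sum_filter_mem_ceK_le (hP : IsKernel P) (hγ0 : 0 ≤ γ) (hγ1 : γ < 1)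
    (hπseq : ∀ k, IsPolicy (πseq k)) (N : ℕ) (s : S) :
    ∑ n ∈ (range (N + 1)).filter (fun n => s ∈ ceK P γ πseq s₀ β n),
        dvisit P γ (πseq (n + 1)) (dirac s₀) s ≤
      2 * ceBetaTilde P γ πseq s₀ β N s +
        ⨆ π : {π' : S → A → ℝ // IsPolicy π'}, dvisit P γ π.1 (dirac s₀) s := by
  have hsup (k : ℕ) := dvisit_le_iSup hP (hπseq k) (isDist_dirac s₀) hγ0 hγ1 s
  rw [ceBetaTilde]
  split_ifs with h
  · exact sum_filter_le_of_findGreatest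
      (fun i => (isDist_dvisit hP (hπseq i) (isDist_ceMu hP hπseq hγ0 hγ1 i) hγ0 hγ1).1 s)
      (fun n => dvisit_le_two_mul_ceD hP hπseq hγ0 hγ1 n s) (fun n => hsup (n + 1))
      (fun n hn => (mem_filter.1 hn).2) h
  · rw [filter_false_of_mem fun n hn hs => h ⟨n, Nat.lt_succ_iff.1 (mem_range.1 hn), hs⟩,
      sum_empty, mul_zero, zero_add]
    exact ((isDist_dvisit hP (hπseq 0) (isDist_dirac s₀) hγ0 hγ1).1 s).trans (hsup 0)

end CuriousExplorer

theorem stmt12_ce_provable_general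
    (P : S → A → S → ℝ) (γ : ℝ) (hP : IsKernel P) (hγ0 : 0 ≤ γ) (hγ1 : γ < 1)
    (s₀ : S) (πseq : ℕ → S → A → ℝ) (hπseq : ∀ k, IsPolicy (πseq k))
    (β : ℕ → ℝ) (N : ℕ)
    (ε : ℕ → ℝ)
    (hopt : ∀ n ≤ N,
      (⨆ π : {π' : S → A → ℝ // IsPolicy π'},
        value P γ π.1 (ceR P γ πseq s₀ β n) (ceMu P γ πseq s₀ (n + 1))) ≤
      value P γ (πseq (n + 1)) (ceR P γ πseq s₀ β n) (ceMu P γ πseq s₀ (n + 1))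
        + ε n) :
    ∑ n ∈ Finset.range (N + 1),
        (⨆ π : {π' : S → A → ℝ // IsPolicy π'},
          ∑ s ∈ ceK P γ πseq s₀ β n, dvisit P γ π.1 (dirac s₀) s) ≤
      2 * (∑ n ∈ Finset.range (N + 1), ε n) +
      2 * (∑ s : S, ceBetaTilde P γ πseq s₀ β N s) +
      2 * (∑ s : S, ⨆ π : {π' : S → A → ℝ // IsPolicy π'}, dvisit P γ π.1 (dirac s₀) s) := by
  have : Nonempty {π' : S → A → ℝ // IsPolicy π'} := ⟨⟨πseq 0, hπseq 0⟩⟩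
  set M : S → ℝ := fun s => ⨆ π : {π' : S → A → ℝ // IsPolicy π'}, dvisit P γ π.1 (dirac s₀) s
  have hM (s : S) : 0 ≤ M s := ((isDist_dvisit hP (hπseq 0) (isDist_dirac s₀) hγ0 hγ1).1 s).trans
    (dvisit_le_iSup hP (hπseq 0) (isDist_dirac s₀) hγ0 hγ1 s)
  have hcover (n : ℕ) (hn : n ∈ range (N + 1)) :
      (⨆ π : {π' : S → A → ℝ // IsPolicy π'},
        ∑ s ∈ ceK P γ πseq s₀ β n, dvisit P γ π.1 (dirac s₀) s) ≤
      ∑ s ∈ ceK P γ πseq s₀ β n, dvisit P γ (πseq (n + 1)) (dirac s₀) s + 2 * ε n :=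
    ciSup_le fun π => sum_ceK_dvisit_le hP hγ0 hγ1 hπseq
      (hopt n (Nat.lt_succ_iff.1 (mem_range.1 hn))) π.2
  have hswap : ∑ n ∈ range (N + 1), ∑ s ∈ ceK P γ πseq s₀ β n,
        dvisit P γ (πseq (n + 1)) (dirac s₀) s =
      ∑ s, ∑ n ∈ (range (N + 1)).filter (fun n => s ∈ ceK P γ πseq s₀ β n),
        dvisit P γ (πseq (n + 1)) (dirac s₀) s :=
    sum_comm' fun n s => by simp
  calc _ ≤ ∑ n ∈ range (N + 1), (∑ s ∈ ceK P γ πseq s₀ β n,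
          dvisit P γ (πseq (n + 1)) (dirac s₀) s + 2 * ε n) := sum_le_sum hcover
    _ ≤ ∑ s, (2 * ceBetaTilde P γ πseq s₀ β N s + M s) + 2 * ∑ n ∈ range (N + 1), ε n := by
        rw [sum_add_distrib, ← mul_sum, hswap]
        gcongr with s
        exact sum_filter_mem_ceK_le hP hγ0 hγ1 hπseq N s
    _ ≤ _ := by
        rw [sum_add_distrib, ← mul_sum]
        linarith [sum_nonneg fun s (_ : s ∈ univ) => hM s]

/-- Theorem 1, deterministic form: if for every `n ≤ N` the
policy `π_{n+1}` is `ε_n`-optimal for the intrinsic reward `r_n` with starting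
distribution `μ_n`, then
`Σ_{n=0}^N sup_{π∈Π} Σ_{s∈K_n} d_{δ_{s₀}}^π(s)
  ≤ 2 Σ_{n=0}^N ε_n + 2 Σ_s β̃(s) + 2 Σ_s sup_{π∈Π} d_{δ_{s₀}}^π(s)`. -/
theorem stmt12_ce_provable
    (P : S → A → S → ℝ) (γ : ℝ) (hP : IsKernel P) (hγ0 : 0 ≤ γ) (hγ1 : γ < 1)
    (s₀ : S) (πseq : ℕ → S → A → ℝ) (hπseq : ∀ k, IsPolicy (πseq k))
    (β : ℕ → ℝ) (hβ : ∀ n, 0 ≤ β n) (N : ℕ)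
    (ε : ℕ → ℝ) (hε : ∀ n ≤ N, 0 ≤ ε n)
    (hopt : ∀ n ≤ N,
      (⨆ π : {π' : S → A → ℝ // IsPolicy π'},
        value P γ π.1 (ceR P γ πseq s₀ β n) (ceMu P γ πseq s₀ (n + 1))) ≤
      value P γ (πseq (n + 1)) (ceR P γ πseq s₀ β n) (ceMu P γ πseq s₀ (n + 1))
        + ε n) :
    ∑ n ∈ Finset.range (N + 1),
        (⨆ π : {π' : S → A → ℝ // IsPolicy π'},
          ∑ s ∈ ceK P γ πseq s₀ β n, dvisit P γ π.1 (dirac s₀) s) ≤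
      2 * (∑ n ∈ Finset.range (N + 1), ε n) +
      2 * (∑ s : S, ceBetaTilde P γ πseq s₀ β N s) +
      2 * (∑ s : S, ⨆ π : {π' : S → A → ℝ // IsPolicy π'}, dvisit P γ π.1 (dirac s₀) s) :=
  stmt12_ce_provable_general P γ hP hγ0 hγ1 s₀ πseq hπseq β N ε hopt
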